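/- arXiv:1404.4458 — 12 statements merged into one kernel-verified Lean document; each statement's English description precedes it below -/
import Mathlib

section
/- If H1 and H2 are hyperplanes in a partial linear space with H1 ⊆ H2 and H2 is spiky, then H1 = H2. -/
namespace SegrePLS

open Set

variable {P : Type*}

/-- Two points are adjacent (collinear) if they lie on a common line. -/
def Adj (Ls : Set (Set P)) (a b : P) : Prop := ∃ l ∈ Ls, a ∈ l ∧ b ∈ l

/-- A subspace: any line meeting it in at least two points is contained in it. -/
def IsSubspace (Ls : Set (Set P)) (X : Set P) : Prop :=
  ∀ l ∈ Ls, (∃ a ∈ l ∩ X, ∃ b ∈ l ∩ X, a ≠ b) → l ⊆ X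

/-- A hyperplane: a proper subspace meeting every line. -/
def IsHyperplane (Ls : Set (Set P)) (X : Set P) : Prop :=
  IsSubspace Ls X ∧ X ≠ Set.univ ∧ ∀ l ∈ Ls, (l ∩ X).Nonempty

/-- A partial linear space: every line has at least two points, every point is on a
line, and two distinct lines share at most one point. -/
def IsPLS (Ls : Set (Set P)) : Prop :=
  (∀ l ∈ Ls, ∃ a ∈ l, ∃ b ∈ l, a ≠ b) ∧
  (∀ p : P, ∃ l ∈ Ls, p ∈ l) ∧
  (∀ l ∈ Ls, ∀ k ∈ Ls, ∀ a b : P, a ≠ b → a ∈ l → b ∈ l → a ∈ k → b ∈ k → l = k)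

/-- Spiky set: every point of `X` is adjacent to some point outside `X`. -/
def Spiky (Ls : Set (Set P)) (X : Set P) : Prop :=
  ∀ a ∈ X, ∃ b, b ∉ X ∧ Adj Ls a b

/-- Flappy set: for every line contained in `X` there is a point outside `X`
adjacent to all points of the line. -/
def Flappy (Ls : Set (Set P)) (X : Set P) : Prop :=
  ∀ l ∈ Ls, l ⊆ X → ∃ a, a ∉ X ∧ ∀ p ∈ l, Adj Ls a p


/-- If `H1 ⊆ H2` are hyperplanes and `H2` is spiky, then `H1 = H2`. -/
theorem spiky_hyperplane_minimal {Ls : Set (Set P)} {H1 H2 : Set P}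
    (hpls : IsPLS Ls) (h1 : IsHyperplane Ls H1) (h2 : IsHyperplane Ls H2)
    (hsub : H1 ⊆ H2) (hsp : Spiky Ls H2) :
    H1 = H2 := by
  refine Set.Subset.antisymm hsub fun x hx => ?_
  by_contra hx1
  obtain ⟨b, hb, l, hl, hxl, hbl⟩ := hsp x hx
  obtain ⟨a, hal, haH1⟩ := h1.2.2 l hl
  rcases eq_or_ne a x with rfl | hax
  · exact hx1 haH1
  · exact hb (h2.1 l hl ⟨a, ⟨hal, hsub haH1⟩, x, ⟨hxl, hx⟩, hax⟩ hbl)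

end SegrePLS
end

section
/- In the Segre product of partial linear spaces, every triangle (three pairwise adjacent, non-collinear points) is contained in a single fiber σ(a, i, S_i); i.e., all three points agree on all coordinates except at most one. -/
namespace SegrePLS

open Set

variable {P : Type*}

variable {I : Type*} [DecidableEq I] {Pt : I → Type*}

/-- Lines of the Segre product: vary exactly one coordinate along a line of a factor. -/
def segreLines (Ls : ∀ i, Set (Set (Pt i))) : Set (Set (∀ i, Pt i)) :=
  { L | ∃ (a : ∀ i, Pt i) (i : I) (l : Set (Pt i)),
      l ∈ Ls i ∧ L = (fun x => Function.update a i x) '' l }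

/-- The slice `H_i^[a] = {x ∈ S_i : σ(a,i,x) ∈ H}`. -/
def slice (H : Set (∀ i, Pt i)) (a : ∀ i, Pt i) (i : I) : Set (Pt i) :=
  { x | Function.update a i x ∈ H }




lemma adj_eq_off {Ls : ∀ i, Set (Set (Pt i))} {a b : ∀ i, Pt i}
    (h : Adj (segreLines Ls) a b) : ∃ i : I, ∀ j : I, j ≠ i → a j = b j := by
  obtain ⟨L, ⟨c, i, l, -, rfl⟩, ⟨x, -, hx⟩, ⟨y, -, hy⟩⟩ := h
  refine ⟨i, fun j hj => ?_⟩
  rw [← hx, ← hy]; simp only [Function.update_of_ne hj]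

/-- Every triangle of a Segre product lies in a single fiber: the three points agree
on all coordinates except at most one. -/
theorem segre_triangle_in_fiber [Nontrivial I] (Ls : ∀ i, Set (Set (Pt i)))
    (h : ∀ i, IsPLS (Ls i)) (p1 p2 p3 : ∀ i, Pt i)
    (h12 : p1 ≠ p2) (h13 : p1 ≠ p3) (h23 : p2 ≠ p3)
    (a12 : Adj (segreLines Ls) p1 p2) (a13 : Adj (segreLines Ls) p1 p3)
    (a23 : Adj (segreLines Ls) p2 p3)
    (hnc : ¬ ∃ l ∈ segreLines Ls, p1 ∈ l ∧ p2 ∈ l ∧ p3 ∈ l) :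
    ∃ i : I, ∀ j : I, j ≠ i → p1 j = p2 j ∧ p1 j = p3 j := by
  obtain ⟨i, hi⟩ := adj_eq_off a12
  obtain ⟨j, hj⟩ := adj_eq_off a13
  obtain ⟨k, hk⟩ := adj_eq_off a23
  by_cases hij : i = j
  · subst hij
    exact ⟨i, fun m hm => ⟨hi m hm, hj m hm⟩⟩
  · exfalso
    have h1 : p1 i ≠ p2 i := fun e => h12 (funext fun m => by
      by_cases hm : m = i; · subst hm; exact e
      · exact hi m hm)
    have h2 : p1 j ≠ p3 j := fun e => h13 (funext fun m => by
      by_cases hm : m = j; · subst hm; exact e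
      · exact hj m hm)
    have hik : i = k := by
      by_contra hik
      exact h1 ((hj i hij).trans (hk i hik).symm)
    have hjk : j = k := by
      by_contra hjk
      exact h2 ((hi j (Ne.symm hij)).trans (hk j hjk))
    exact hij (hik.trans hjk.symm)


end SegrePLS
end

section
/- If all factors M_i are gamma spaces, then their Segre product is a gamma space. -/
namespace SegrePLS

open Set

variable {P : Type*}

/-- Gamma space: for every point the set of points adjacent to it is a subspace. -/
def IsGamma (Ls : Set (Set P)) : Prop :=
  ∀ a : P, IsSubspace Ls { b | Adj Ls a b }

/-- Veblenian partial linear space (Veblen / Pasch condition). -/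
def IsVeblenian (Ls : Set (Set P)) : Prop :=
  ∀ L1 ∈ Ls, ∀ L2 ∈ Ls, ∀ K1 ∈ Ls, ∀ K2 ∈ Ls, ∀ p : P,
    p ∈ L1 → p ∈ L2 → L1 ≠ L2 → p ∉ K1 → p ∉ K2 → K1 ≠ K2 →
    (L1 ∩ K1).Nonempty → (L1 ∩ K2).Nonempty →
    (L2 ∩ K1).Nonempty → (L2 ∩ K2).Nonempty → (K1 ∩ K2).Nonempty

/-- Every line has at least three points. -/
def LinesAtLeast3 (Ls : Set (Set P)) : Prop :=
  ∀ l ∈ Ls, ∃ a ∈ l, ∃ b ∈ l, ∃ c ∈ l, a ≠ b ∧ a ≠ c ∧ b ≠ c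

variable {I : Type*} [DecidableEq I] {Pt : I → Type*}

lemma adj_iff (Ls : ∀ i, Set (Set (Pt i))) (a b : ∀ i, Pt i) :
    Adj (segreLines Ls) a b ↔
      ∃ i, (∀ j, j ≠ i → a j = b j) ∧ ∃ l ∈ Ls i, a i ∈ l ∧ b i ∈ l := by
  constructor
  · rintro ⟨L, ⟨c, i, l, hl, rfl⟩, ⟨x, hx, rfl⟩, ⟨y, hy, hyb⟩⟩
    refine ⟨i, fun j hj => ?_, l, hl, by simp [hx], ?_⟩
    · rw [← hyb]; simp [Function.update_of_ne hj]
    · rw [← hyb]; simpa using hy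
  · rintro ⟨i, hagree, l, hl, hai, hbi⟩
    refine ⟨(fun x => Function.update a i x) '' l, ⟨a, i, l, hl, rfl⟩,
      ⟨a i, hai, by simp⟩, ⟨b i, hbi, ?_⟩⟩
    funext j
    by_cases hj : j = i
    · subst hj; simp
    · simp [Function.update_of_ne hj, hagree j hj]

/-- If all factors are gamma spaces then their Segre product is a gamma space. -/
theorem segre_gamma [Nontrivial I] (Ls : ∀ i, Set (Set (Pt i)))
    (h : ∀ i, IsPLS (Ls i)) (hg : ∀ i, IsGamma (Ls i)) :
    IsGamma (segreLines Ls) := by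
  intro a
  rintro L ⟨c, j, l, hl, rfl⟩ ⟨p, ⟨⟨x, hx, rfl⟩, hpX⟩, q, ⟨⟨y, hy, rfl⟩, hqX⟩, hpq⟩
  have hxy : x ≠ y := fun e => hpq (by rw [e])
  rw [Set.mem_setOf_eq, adj_iff] at hpX hqX
  obtain ⟨ip, hap, lp, hlp, haip, hpip⟩ := hpX
  obtain ⟨iq, haq, lq, hlq, haiq, hqiq⟩ := hqX
  by_cases hcase : ∀ k, k ≠ j → a k = c k
  · -- a agrees with c off j
    have hadjx : Adj (Ls j) (a j) x := by
      by_cases hij : ip = j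
      · subst hij; exact ⟨lp, hlp, haip, by simpa using hpip⟩
      · have hax : a j = x := by
          have := hap j (Ne.symm hij)
          simpa using this
        obtain ⟨l', hl', hx'⟩ := (h j).2.1 x
        exact ⟨l', hl', hax ▸ hx', hx'⟩
    have hadjy : Adj (Ls j) (a j) y := by
      by_cases hij : iq = j
      · subst hij; exact ⟨lq, hlq, haiq, by simpa using hqiq⟩
      · have hay : a j = y := by
          have := haq j (Ne.symm hij)
          simpa using this
        obtain ⟨l', hl', hy'⟩ := (h j).2.1 y
        exact ⟨l', hl', hay ▸ hy', hy'⟩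
    have hsub : l ⊆ { b | Adj (Ls j) (a j) b } :=
      hg j (a j) l hl ⟨x, ⟨hx, hadjx⟩, y, ⟨hy, hadjy⟩, hxy⟩
    rintro r ⟨z, hz, rfl⟩
    rw [Set.mem_setOf_eq, adj_iff]
    refine ⟨j, fun k hk => ?_, ?_⟩
    · rw [hcase k hk]; simp [Function.update_of_ne hk]
    · obtain ⟨l', hl', h1, h2⟩ := hsub hz
      exact ⟨l', hl', h1, by simpa using h2⟩
  · push_neg at hcase
    obtain ⟨k, hkj, hak⟩ := hcase
    have hipk : ip = k := by
      by_contra hne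
      have := hap k (fun e => hne e.symm)
      simp [Function.update_of_ne hkj] at this
      exact hak this
    have hiqk : iq = k := by
      by_contra hne
      have := haq k (fun e => hne e.symm)
      simp [Function.update_of_ne hkj] at this
      exact hak this
    have h1 : a j = x := by
      have := hap j (by rw [hipk]; exact hkj.symm)
      simpa using this
    have h2 : a j = y := by
      have := haq j (by rw [hiqk]; exact hkj.symm)
      simpa using this
    exact absurd (h1 ▸ h2) hxy

end SegrePLS
end

section
/- If all factors M_i are Veblenian partial linear spaces, then their Segre product is Veblenian. -/
namespace SegrePLS

open Set

variable {P : Type*}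

variable {I : Type*} [DecidableEq I] {Pt : I → Type*}

lemma mem_line_form {Ls : ∀ i, Set (Set (Pt i))} {L : Set (∀ i, Pt i)} {p : ∀ i, Pt i}
    (hL : L ∈ segreLines Ls) (hp : p ∈ L) :
    ∃ i, ∃ l ∈ Ls i, p i ∈ l ∧ L = (fun x => Function.update p i x) '' l := by
  obtain ⟨a, i, l, hl, rfl⟩ := hL
  obtain ⟨x, hx, rfl⟩ := hp
  refine ⟨i, l, hl, by simpa using hx, ?_⟩
  have hf : (fun y => Function.update (Function.update a i x) i y)
      = fun y => Function.update a i y := by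
    funext y; simp [Function.update_idem]
  rw [hf]

lemma normalize {Ls : ∀ i, Set (Set (Pt i))} (h : ∀ i, IsPLS (Ls i))
    {p : ∀ i, Pt i} {i : I} {l1 l2 : Set (Pt i)}
    (hl1 : l1 ∈ Ls i) (hl2 : l2 ∈ Ls i) (hpl1 : p i ∈ l1) (hpl2 : p i ∈ l2)
    (hll : l1 ≠ l2) {K : Set (∀ i, Pt i)} (hK : K ∈ segreLines Ls) (hpK : p ∉ K)
    (h1 : (((fun x => Function.update p i x) '' l1) ∩ K).Nonempty)
    (h2 : (((fun x => Function.update p i x) '' l2) ∩ K).Nonempty) :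
    ∃ k ∈ Ls i, p i ∉ k ∧ (l1 ∩ k).Nonempty ∧ (l2 ∩ k).Nonempty ∧
      K = (fun x => Function.update p i x) '' k := by
  obtain ⟨b, j, k, hk, rfl⟩ := hK
  obtain ⟨q1, ⟨x1, hx1, rfl⟩, y1, hy1, hq1⟩ := h1
  obtain ⟨q2, ⟨x2, hx2, rfl⟩, y2, hy2, hq2⟩ := h2
  have hji : j = i := by
    by_contra hji
    have e1 : b i = x1 := by
      simpa [Function.update_of_ne (Ne.symm hji)] using congrFun hq1 i
    have e2 : b i = x2 := by
      simpa [Function.update_of_ne (Ne.symm hji)] using congrFun hq2 i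
    have hx12 : x1 = x2 := e1 ▸ e2
    by_cases hx : x1 = p i
    · apply hpK
      have : Function.update p i x1 = p := by rw [hx]; exact Function.update_eq_self i p
      exact this ▸ ⟨y1, hy1, hq1⟩
    · exact hll ((h i).2.2 l1 hl1 l2 hl2 x1 (p i) hx hx1 hpl1 (hx12 ▸ hx2) hpl2)
  subst hji
  have hb : ∀ y, Function.update b j y = Function.update p j y := by
    intro y; funext m
    by_cases hm : m = j
    · subst hm; simp
    · have h2 : b m = p m := by
        simpa [Function.update_of_ne hm] using congrFun hq1 m
      simp [Function.update_of_ne hm, h2]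
  have hf : (fun x : Pt j => Function.update b j x) = fun x => Function.update p j x :=
    funext hb
  have hy1' : y1 = x1 := by simpa using congrFun hq1 j
  have hy2' : y2 = x2 := by simpa using congrFun hq2 j
  refine ⟨k, hk, ?_, ⟨x1, hx1, hy1' ▸ hy1⟩, ⟨x2, hx2, hy2' ▸ hy2⟩, by rw [hf]⟩
  intro hcon
  apply hpK
  exact ⟨p j, hcon, by simp [hb (p j)]⟩

/-- If all factors are Veblenian then their Segre product is Veblenian. -/
theorem segre_veblenian [Nontrivial I] (Ls : ∀ i, Set (Set (Pt i)))
    (h : ∀ i, IsPLS (Ls i)) (hv : ∀ i, IsVeblenian (Ls i)) :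
    IsVeblenian (segreLines Ls) := by
  intro L1 hL1 L2 hL2 K1 hK1 K2 hK2 p hp1 hp2 hL12 hpK1 hpK2 hK12 h11 h12 h21 h22
  obtain ⟨i1, l1, hl1, hpl1, rfl⟩ := mem_line_form hL1 hp1
  obtain ⟨i2, l2, hl2, hpl2, rfl⟩ := mem_line_form hL2 hp2
  have hii : i1 = i2 := by
    by_contra hne
    obtain ⟨q1, ⟨x1, hx1, rfl⟩, hq1K⟩ := h11
    obtain ⟨q2, ⟨x2, hx2, rfl⟩, hq2K⟩ := h21
    obtain ⟨b, j, k, hk, rfl⟩ := hK1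
    obtain ⟨y1, hy1, hq1⟩ := hq1K
    obtain ⟨y2, hy2, hq2⟩ := hq2K
    by_cases hj : j = i1
    · subst hj
      apply hpK1
      have heq : Function.update p i2 x2 = p := by
        funext m
        by_cases hm : m = i2
        · subst hm
          have e2 : b m = x2 := by
            simpa [Function.update_of_ne (fun e => hne e.symm)] using congrFun hq2 m
          have e1 : b m = p m := by
            simpa [Function.update_of_ne (fun e => hne e.symm)] using congrFun hq1 m
          rw [Function.update_self, ← e2, e1]
        · rw [Function.update_of_ne hm]
      exact heq ▸ ⟨y2, hy2, hq2⟩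
    · apply hpK1
      have heq : Function.update p i1 x1 = p := by
        funext m
        by_cases hm : m = i1
        · subst hm
          have e1 : b m = x1 := by
            simpa [Function.update_of_ne (fun e => hj e.symm)] using congrFun hq1 m
          have e2 : b m = p m := by
            simpa [Function.update_of_ne (fun e => hj e.symm),
              Function.update_of_ne hne] using congrFun hq2 m
          rw [Function.update_self, ← e1, e2]
        · rw [Function.update_of_ne hm]
      exact heq ▸ ⟨y1, hy1, hq1⟩
  subst hii
  have hll : l1 ≠ l2 := fun e => hL12 (by rw [e])
  obtain ⟨k1, hk1, hpk1, hlk11, hlk21, rfl⟩ :=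
    normalize h hl1 hl2 hpl1 hpl2 hll hK1 hpK1 h11 h21
  obtain ⟨k2, hk2, hpk2, hlk12, hlk22, rfl⟩ :=
    normalize h hl1 hl2 hpl1 hpl2 hll hK2 hpK2 h12 h22
  have hkk : k1 ≠ k2 := fun e => hK12 (by rw [e])
  obtain ⟨z, hz1, hz2⟩ := hv i1 l1 hl1 l2 hl2 k1 hk1 k2 hk2 (p i1)
    hpl1 hpl2 hll hpk1 hpk2 hkk hlk11 hlk12 hlk21 hlk22
  exact ⟨Function.update p i1 z, ⟨z, hz1, rfl⟩, ⟨z, hz2, rfl⟩⟩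

end SegrePLS
end

section
/- Let M be a partial linear space and H a spiky hyperplane of M. The complement M∖H is an affine partial linear space (every point lies on a line parallel to any given line) if and only if every point of H is adjacent to every point outside H. -/
namespace SegrePLS

open Set

variable {P : Type*}

/-- For a spiky hyperplane `H`, the complement is an affine partial linear space
(every point outside `H` lies on a line parallel to any given line of the
complement) iff every point of `H` is adjacent to every point outside `H`. -/
theorem complement_affine_iff {Ls : Set (Set P)} {H : Set P}
    (hpls : IsPLS Ls) (hH : IsHyperplane Ls H) (hsp : Spiky Ls H) :
    (∀ a, a ∉ H → ∀ l ∈ Ls, ¬ l ⊆ H →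
        ∃ k ∈ Ls, ¬ k ⊆ H ∧ a ∈ k ∧ k ∩ H = l ∩ H) ↔
      (∀ a ∈ H, ∀ b, b ∉ H → Adj Ls a b) := by

  obtain ⟨hsub, hne, hmeet⟩ := hH
  have key : ∀ l ∈ Ls, ¬ l ⊆ H → ∀ c ∈ l ∩ H, l ∩ H = {c} := by
    intro l hl hlH c hc
    ext d
    constructor
    · intro hd
      by_contra hdc
      exact hlH (hsub l hl ⟨c, hc, d, hd, fun h => hdc (h ▸ rfl)⟩)
    · rintro rfl; exact hc
  constructor
  · intro haff a ha b hb
    obtain ⟨c, hc, l, hl, hal, hcl⟩ := hsp a ha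
    have hlH : ¬ l ⊆ H := fun h => hc (h hcl)
    obtain ⟨k, hk, hkH, hbk, hkeq⟩ := haff b hb l hl hlH
    have : a ∈ k ∩ H := by rw [hkeq]; exact ⟨hal, ha⟩
    exact ⟨k, hk, this.1, hbk⟩
  · intro hadj a ha l hl hlH
    obtain ⟨c, hcl, hcH⟩ := hmeet l hl
    obtain ⟨k, hk, hck, hak⟩ := hadj c hcH a ha
    have hkH : ¬ k ⊆ H := fun h => ha (h hak)
    refine ⟨k, hk, hkH, hak, ?_⟩
    rw [key k hk hkH c ⟨hck, hcH⟩, key l hl hlH c ⟨hcl, hcH⟩]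

end SegrePLS
end

section
/- Let M be a Veblenian gamma space with all lines of size at least 3 and H a flappy hyperplane of M. Then three pairwise distinct points p1, p2, p3 ∈ H are collinear if and only if there exist points a1, a2, a3 ∉ H, pairwise adjacent, such that for each permutation {i,j,k} = {1,2,3}, p_k lies on the line through a_i and a_j. -/
namespace SegrePLS

open Set

variable {P : Type*}

lemma subspace_line_subset {Ls : Set (Set P)} {H : Set P} (hs : IsSubspace Ls H)
    {l : Set P} (hl : l ∈ Ls) {a b : P} (ha : a ∈ l) (hb : b ∈ l)
    (haH : a ∈ H) (hbH : b ∈ H) (hab : a ≠ b) : l ⊆ H :=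
  hs l hl ⟨a, ⟨ha, haH⟩, b, ⟨hb, hbH⟩, hab⟩

lemma unique_H_point {Ls : Set (Set P)} {H : Set P} (hs : IsSubspace Ls H)
    {l : Set P} (hl : l ∈ Ls) {a p q : P} (ha : a ∈ l) (haH : a ∉ H)
    (hp : p ∈ l) (_hpH : p ∈ H) (hq : q ∈ l) (hqH : q ∈ H) : q = p := by
  by_contra h
  exact haH (subspace_line_subset hs hl hq hp hqH _hpH h ha)

lemma third_point {Ls : Set (Set P)} (h3 : LinesAtLeast3 Ls) {l : Set P}
    (hl : l ∈ Ls) (u v : P) : ∃ w ∈ l, w ≠ u ∧ w ≠ v := by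
  obtain ⟨a, ha, b, hb, c, hc, hab, hac, hbc⟩ := h3 l hl
  by_cases h1 : a ≠ u ∧ a ≠ v
  · exact ⟨a, ha, h1⟩
  by_cases h2 : b ≠ u ∧ b ≠ v
  · exact ⟨b, hb, h2⟩
  by_cases h3' : c ≠ u ∧ c ≠ v
  · exact ⟨c, hc, h3'⟩
  push_neg at h1 h2 h3'
  exfalso
  have ha' : a = u ∨ a = v := (em (a = u)).imp id h1
  have hb' : b = u ∨ b = v := (em (b = u)).imp id h2
  have hc' : c = u ∨ c = v := (em (c = u)).imp id h3'
  rcases ha' with rfl | rfl <;> rcases hb' with h | h <;> rcases hc' with h' | h' <;>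
    first
    | exact hab h.symm
    | exact hac h'.symm
    | exact hbc (h.trans h'.symm)

lemma line_unique {Ls : Set (Set P)} (hpls : IsPLS Ls) {l k : Set P}
    (hl : l ∈ Ls) (hk : k ∈ Ls) {a b : P} (hab : a ≠ b)
    (hal : a ∈ l) (hbl : b ∈ l) (hak : a ∈ k) (hbk : b ∈ k) : l = k :=
  hpls.2.2 l hl k hk a b hab hal hbl hak hbk

lemma gamma_line {Ls : Set (Set P)} (hg : IsGamma Ls) {a x y : P} {l : Set P}
    (hl : l ∈ Ls) (hx : x ∈ l) (hy : y ∈ l) (hxy : x ≠ y)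
    (hax : Adj Ls a x) (hay : Adj Ls a y) : ∀ z ∈ l, Adj Ls a z :=
  fun z hz => hg a l hl ⟨x, ⟨hx, hax⟩, y, ⟨hy, hay⟩, hxy⟩ hz

/-- In a Veblenian gamma space with lines of size at least 3 and a flappy
hyperplane `H`, three pairwise distinct points of `H` are collinear iff there is a
triangle outside `H` whose sides pass through them. -/
theorem collinearity_on_flappy_hyperplane {Ls : Set (Set P)} {H : Set P}
    (hpls : IsPLS Ls) (hg : IsGamma Ls) (hv : IsVeblenian Ls)
    (h3 : LinesAtLeast3 Ls) (hH : IsHyperplane Ls H) (hfl : Flappy Ls H)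
    (p1 p2 p3 : P) (hp1 : p1 ∈ H) (hp2 : p2 ∈ H) (hp3 : p3 ∈ H)
    (h12 : p1 ≠ p2) (h13 : p1 ≠ p3) (h23 : p2 ≠ p3) :
    (∃ l ∈ Ls, p1 ∈ l ∧ p2 ∈ l ∧ p3 ∈ l) ↔
      ∃ a1 a2 a3 : P, a1 ∉ H ∧ a2 ∉ H ∧ a3 ∉ H ∧
        a1 ≠ a2 ∧ a1 ≠ a3 ∧ a2 ≠ a3 ∧
        (∃ l ∈ Ls, a1 ∈ l ∧ a2 ∈ l ∧ p3 ∈ l) ∧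
        (∃ l ∈ Ls, a1 ∈ l ∧ a3 ∈ l ∧ p2 ∈ l) ∧
        (∃ l ∈ Ls, a2 ∈ l ∧ a3 ∈ l ∧ p1 ∈ l) := by
  constructor
  · rintro ⟨l, hl, hp1l, hp2l, hp3l⟩
    have hlH : l ⊆ H := subspace_line_subset hH.1 hl hp1l hp2l hp1 hp2 h12
    obtain ⟨a, haH, hadj⟩ := hfl l hl hlH
    obtain ⟨L1, hL1, haL1, hp1L1⟩ := hadj p1 hp1l
    obtain ⟨L2, hL2, haL2, hp2L2⟩ := hadj p2 hp2l
    obtain ⟨L3, hL3, haL3, hp3L3⟩ := hadj p3 hp3l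
    have hap3ne : a ≠ p3 := fun h => haH (h ▸ hp3)
    have hL3adj1 : ∀ z ∈ L3, Adj Ls p1 z :=
      gamma_line hg hL3 haL3 hp3L3 hap3ne ⟨L1, hL1, hp1L1, haL1⟩ ⟨l, hl, hp1l, hp3l⟩
    have hL3adj2 : ∀ z ∈ L3, Adj Ls p2 z :=
      gamma_line hg hL3 haL3 hp3L3 hap3ne ⟨L2, hL2, hp2L2, haL2⟩ ⟨l, hl, hp2l, hp3l⟩
    obtain ⟨a3, ha3L3, ha3p3, -⟩ := third_point h3 hL3 p3 p3
    have ha3H : a3 ∉ H := fun h =>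
      ha3p3 (unique_H_point hH.1 hL3 haL3 haH hp3L3 hp3 ha3L3 h)
    obtain ⟨K1, hK1, hp1K1, ha3K1⟩ := hL3adj1 a3 ha3L3
    obtain ⟨K2, hK2, hp2K2, ha3K2⟩ := hL3adj2 a3 ha3L3
    have hK12 : K1 ≠ K2 := by
      intro h; subst h
      exact ha3H (subspace_line_subset hH.1 hK1 hp1K1 hp2K2 hp1 hp2 h12 ha3K1)
    obtain ⟨a1, ha1K2, ha1a3, ha1p2⟩ := third_point h3 hK2 a3 p2
    have ha1H : a1 ∉ H := fun h =>
      ha1p2 (unique_H_point hH.1 hK2 ha3K2 ha3H hp2K2 hp2 ha1K2 h)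
    have ha3p2 : a3 ≠ p2 := fun h => ha3H (h ▸ hp2)
    have hK2adj3 : ∀ z ∈ K2, Adj Ls p3 z :=
      gamma_line hg hK2 ha3K2 hp2K2 ha3p2 ⟨L3, hL3, hp3L3, ha3L3⟩ ⟨l, hl, hp3l, hp2l⟩
    obtain ⟨M, hM, hp3M, ha1M⟩ := hK2adj3 a1 ha1K2
    have ha3M : a3 ∉ M := by
      intro h
      have hMK2 : M = K2 := line_unique hpls hM hK2 ha1a3 ha1M h ha1K2 ha3K2
      exact ha1H (subspace_line_subset hH.1 hK2 hp2K2 (hMK2 ▸ hp3M) hp2 hp3 h23 ha1K2)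
    have hp2K1 : p2 ∉ K1 := fun h =>
      ha3H (subspace_line_subset hH.1 hK1 hp1K1 h hp1 hp2 h12 ha3K1)
    have hp2M : p2 ∉ M := fun h =>
      ha1H (subspace_line_subset hH.1 hM hp3M h hp3 hp2 h23.symm ha1M)
    have hK2l : K2 ≠ l := fun h => ha3H (hlH (h ▸ ha3K2))
    have hK1M : K1 ≠ M := fun h => ha3M (h ▸ ha3K1)
    obtain ⟨a2, ha2K1, ha2M⟩ := hv K2 hK2 l hl K1 hK1 M hM p2 hp2K2 hp2l hK2l hp2K1 hp2M hK1M
      ⟨a3, ha3K2, ha3K1⟩ ⟨a1, ha1K2, ha1M⟩ ⟨p1, hp1l, hp1K1⟩ ⟨p3, hp3l, hp3M⟩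
    have ha2H : a2 ∉ H := by
      intro h
      have e1 : a2 = p1 := unique_H_point hH.1 hK1 ha3K1 ha3H hp1K1 hp1 ha2K1 h
      have e2 : a2 = p3 := unique_H_point hH.1 hM ha1M ha1H hp3M hp3 ha2M h
      exact h13 (e1.symm.trans e2)
    have ha1K1 : a1 ∉ K1 := fun h =>
      hK12 (line_unique hpls hK1 hK2 ha1a3 h ha3K1 ha1K2 ha3K2)
    have ha1a2 : a1 ≠ a2 := fun h => ha1K1 (h ▸ ha2K1)
    have ha2a3 : a2 ≠ a3 := fun h => ha3M (h ▸ ha2M)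
    exact ⟨a1, a2, a3, ha1H, ha2H, ha3H, ha1a2, ha1a3, ha2a3,
      ⟨M, hM, ha1M, ha2M, hp3M⟩, ⟨K2, hK2, ha1K2, ha3K2, hp2K2⟩,
      ⟨K1, hK1, ha2K1, ha3K1, hp1K1⟩⟩
  · rintro ⟨a1, a2, a3, ha1H, ha2H, ha3H, h12a, h13a, h23a,
      ⟨l3, hl3, ha1l3, ha2l3, hp3l3⟩, ⟨l2, hl2, ha1l2, ha3l2, hp2l2⟩,
      ⟨l1, hl1, ha2l1, ha3l1, hp1l1⟩⟩
    have hadj_a1 : ∀ z ∈ l1, Adj Ls a1 z :=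
      gamma_line hg hl1 ha2l1 ha3l1 h23a ⟨l3, hl3, ha1l3, ha2l3⟩ ⟨l2, hl2, ha1l2, ha3l2⟩
    obtain ⟨n, hn, ha1n, hp1n⟩ := hadj_a1 p1 hp1l1
    have hadj_p1 : ∀ z ∈ l2, Adj Ls p1 z :=
      gamma_line hg hl2 ha1l2 ha3l2 h13a ⟨n, hn, hp1n, ha1n⟩ ⟨l1, hl1, hp1l1, ha3l1⟩
    obtain ⟨m, hm, hp1m, hp2m⟩ := hadj_p1 p2 hp2l2
    have hmH : m ⊆ H := subspace_line_subset hH.1 hm hp1m hp2m hp1 hp2 h12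
    have ha3l3 : a3 ∉ l3 := by
      intro h
      have e : l3 = l1 := line_unique hpls hl3 hl1 h23a ha2l3 h ha2l1 ha3l1
      exact ha2H (subspace_line_subset hH.1 hl1 hp1l1 (e ▸ hp3l3) hp1 hp3 h13 ha2l1)
    have ha3m : a3 ∉ m := fun h => ha3H (hmH h)
    have hl1l2 : l1 ≠ l2 := by
      intro h
      exact ha2H (subspace_line_subset hH.1 hl1 hp1l1 (h.symm ▸ hp2l2) hp1 hp2 h12 ha2l1)
    have hl3m : l3 ≠ m := fun h => ha1H (hmH (h ▸ ha1l3))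
    obtain ⟨x, hxl3, hxm⟩ := hv l1 hl1 l2 hl2 l3 hl3 m hm a3 ha3l1 ha3l2 hl1l2 ha3l3 ha3m hl3m
      ⟨a2, ha2l1, ha2l3⟩ ⟨p1, hp1l1, hp1m⟩ ⟨a1, ha1l2, ha1l3⟩ ⟨p2, hp2l2, hp2m⟩
    have hx : x = p3 := unique_H_point hH.1 hl3 ha1l3 ha1H hp3l3 hp3 hxl3 (hmH hxm)
    exact ⟨m, hm, hp1m, hp2m, hx ▸ hxm⟩

end SegrePLS
end

section
/- Let M be a Veblenian gamma space with all lines of size at least 3 and H a hyperplane of M. Then for every point p ∉ H and every line K ⊄ H, the near-plane Π(p,K) (the union of all lines through p meeting K), provided it is a near-plane (p ∉ K, nonempty, not a single line), meets H in a line: the points Π(p,K) ∩ H on the lines through p crossing K are all collinear. -/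
namespace SegrePLS

open Set

variable {P : Type*}

/-- The near-plane `Π(p,K)`: the union of all lines through `p` meeting `K`. -/
def nearPlane (Ls : Set (Set P)) (p : P) (K : Set P) : Set P :=
  { x | ∃ m ∈ Ls, p ∈ m ∧ (m ∩ K).Nonempty ∧ x ∈ m }

/-- In a Veblenian gamma space with lines of size at least 3, a near-plane `Π(p,K)`
with `p ∉ H` and `K ⊄ H` meets a hyperplane `H` in a line: the points of
`Π(p,K) ∩ H` are all collinear. -/
theorem nearPlane_meets_hyperplane_in_line {Ls : Set (Set P)} {H : Set P}
    (hpls : IsPLS Ls) (hg : IsGamma Ls) (hv : IsVeblenian Ls)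
    (h3 : LinesAtLeast3 Ls) (hH : IsHyperplane Ls H)
    (p : P) (K : Set P) (hp : p ∉ H) (hK : K ∈ Ls) (hKH : ¬ K ⊆ H)
    (hpK : p ∉ K) (hne : (nearPlane Ls p K).Nonempty)
    (hnl : ¬ ∃ m ∈ Ls, nearPlane Ls p K = m) :
    ∃ l ∈ Ls, nearPlane Ls p K ∩ H ⊆ l := by
  classical
  obtain ⟨hsub, hneU, hmeet⟩ := hH
  obtain ⟨q, hqK, hqH⟩ := hmeet K hK
  -- uniqueness of the point of K ∩ H
  have hKHuniq : ∀ z ∈ K, z ∈ H → z = q := by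
    intro z hzK hzH
    by_contra hzq
    exact hKH (hsub K hK ⟨z, ⟨hzK, hzH⟩, q, ⟨hqK, hqH⟩, hzq⟩)
  -- a line through p meets H in at most one point
  have hlineH : ∀ m ∈ Ls, p ∈ m → ∀ a ∈ m, a ∈ H → ∀ b ∈ m, b ∈ H → a = b := by
    intro m hm hpm a ham haH b hbm hbH
    by_contra hab
    exact hp (hsub m hm ⟨a, ⟨ham, haH⟩, b, ⟨hbm, hbH⟩, hab⟩ hpm)
  -- cross adjacency: points on two lines through p meeting K in distinct points are adjacent
  have adj_cross : ∀ m ∈ Ls, ∀ m1 ∈ Ls, p ∈ m → p ∈ m1 →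
      ∀ k, k ∈ m → k ∈ K → ∀ k1, k1 ∈ m1 → k1 ∈ K → k ≠ k1 →
      ∀ x ∈ m, ∀ y ∈ m1, Adj Ls x y := by
    intro m hm m1 hm1 hpm hpm1 k hkm hkK k1 hk1m1 hk1K hkk1 x hx y hy
    have hpk1 : p ≠ k1 := fun h => hpK (h ▸ hk1K)
    have hpk : p ≠ k := fun h => hpK (h ▸ hkK)
    -- k1 is adjacent to all of m
    have hk1m : ∀ z ∈ m, Adj Ls k1 z := by
      intro z hz
      have h1 : Adj Ls k1 p := ⟨m1, hm1, hk1m1, hpm1⟩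
      have h2 : Adj Ls k1 k := ⟨K, hK, hk1K, hkK⟩
      exact hg k1 m hm ⟨p, ⟨hpm, h1⟩, k, ⟨hkm, h2⟩, hpk⟩ hz
    have hxk1 : Adj Ls x k1 := by
      obtain ⟨l, hl, h1, h2⟩ := hk1m x hx
      exact ⟨l, hl, h2, h1⟩
    have hxp : Adj Ls x p := ⟨m, hm, hx, hpm⟩
    exact hg x m1 hm1 ⟨p, ⟨hpm1, hxp⟩, k1, ⟨hk1m1, hxk1⟩, hpk1⟩ hy
  by_cases hA : ∀ a ∈ nearPlane Ls p K ∩ H, a = q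
  · exact ⟨K, hK, fun a ha => (hA a ha) ▸ hqK⟩
  push_neg at hA
  obtain ⟨a1, ⟨⟨m1, hm1, hpm1, ⟨k1, hk1m1, hk1K⟩, ha1m1⟩, ha1H⟩, ha1q⟩ := hA
  have hpk1 : p ≠ k1 := fun h => hpK (h ▸ hk1K)
  -- a second line through p meeting K, distinct from m1
  have hm2ex : ∃ m2 ∈ Ls, p ∈ m2 ∧ (m2 ∩ K).Nonempty ∧ m2 ≠ m1 := by
    by_contra h
    push_neg at h
    apply hnl
    refine ⟨m1, hm1, ?_⟩
    ext x
    constructor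
    · rintro ⟨m, hm, hpm, hmK, hxm⟩
      exact (h m hm hpm hmK) ▸ hxm
    · intro hx; exact ⟨m1, hm1, hpm1, ⟨k1, hk1m1, hk1K⟩, hx⟩
  obtain ⟨m2, hm2, hpm2, ⟨k2, hk2m2, hk2K⟩, hm2m1⟩ := hm2ex
  have hk2k1 : k2 ≠ k1 := by
    rintro rfl
    exact hm2m1 (hpls.2.2 m2 hm2 m1 hm1 p k2 (fun h => hpK (h ▸ hk2K)) hpm2 hk2m2 hpm1 hk1m1)
  -- a1 is adjacent to q : first a1 ~ k2, then K ⊆ adj(a1)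
  have ha1k2 : Adj Ls a1 k2 := by
    obtain ⟨l, hl, h1, h2⟩ := adj_cross m2 hm2 m1 hm1 hpm2 hpm1 k2 hk2m2 hk2K
      k1 hk1m1 hk1K hk2k1 k2 hk2m2 a1 ha1m1
    exact ⟨l, hl, h2, h1⟩
  have ha1k1 : Adj Ls a1 k1 := ⟨m1, hm1, ha1m1, hk1m1⟩
  have hAdja1q : Adj Ls a1 q :=
    hg a1 K hK ⟨k1, ⟨hk1K, ha1k1⟩, k2, ⟨hk2K, ha1k2⟩, Ne.symm hk2k1⟩ hqK
  obtain ⟨l, hl, ha1l, hql⟩ := hAdja1q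
  refine ⟨l, hl, ?_⟩
  rintro a ⟨⟨m, hm, hpm, ⟨k, hkm, hkK⟩, ham⟩, haH⟩
  rcases eq_or_ne a a1 with rfl | haa1
  · exact ha1l
  rcases eq_or_ne a q with rfl | haq
  · exact hql
  have hmne : m ≠ m1 := by
    rintro rfl
    exact haa1 (hlineH m hm hpm a ham haH a1 ha1m1 ha1H)
  have hkk1 : k ≠ k1 := by
    rintro rfl
    exact hmne (hpls.2.2 m hm m1 hm1 p k (fun h => hpK (h ▸ hkK)) hpm hkm hpm1 hk1m1)
  obtain ⟨s, hs, has, ha1s⟩ :=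
    adj_cross m hm m1 hm1 hpm hpm1 k hkm hkK k1 hk1m1 hk1K hkk1 a ham a1 ha1m1
  have hsH : s ⊆ H := hsub s hs ⟨a, ⟨has, haH⟩, a1, ⟨ha1s, ha1H⟩, haa1⟩
  have hps : p ∉ s := fun h => hp (hsH h)
  have hKs : K ≠ s := by
    rintro rfl
    exact hKH hsH
  obtain ⟨z, hzK, hzs⟩ := hv m hm m1 hm1 K hK s hs p hpm hpm1 hmne hpK hps hKs
    ⟨k, hkm, hkK⟩ ⟨a, ham, has⟩ ⟨k1, hk1m1, hk1K⟩ ⟨a1, ha1m1, ha1s⟩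
  have hzq : z = q := hKHuniq z hzK (hsH hzs)
  have hsl : s = l :=
    hpls.2.2 s hs l hl a1 q ha1q ha1s (hzq ▸ hzs) ha1l hql
  exact hsl ▸ has

end SegrePLS
end

section
/- Let H be a subset of the point set S = ∏_{i∈I} S_i of the Segre product M of partial linear spaces M_i. Then H is a hyperplane of M if and only if: for every a ∈ S and i ∈ I, the slice H_i^[a] = {x ∈ S_i : σ(a,i,x) ∈ H} is either a hyperplane of M_i or all of S_i, and for some a ∈ S and i ∈ I the slice H_i^[a] is not all of S_i. -/
namespace SegrePLS

open Set

variable {P : Type*}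

variable {I : Type*} [DecidableEq I] {Pt : I → Type*}

/-- Characterization of hyperplanes in a Segre product: `H` is a hyperplane iff all
of its slices are hyperplanes of the factors or whole point sets, and at least one
slice is proper. -/
theorem segre_hyperplane_iff [Nontrivial I] (Ls : ∀ i, Set (Set (Pt i)))
    (h : ∀ i, IsPLS (Ls i)) (H : Set (∀ i, Pt i)) :
    IsHyperplane (segreLines Ls) H ↔
      ((∀ (a : ∀ i, Pt i) (i : I),
          slice H a i = Set.univ ∨ IsHyperplane (Ls i) (slice H a i)) ∧
        ∃ (a : ∀ i, Pt i) (i : I), slice H a i ≠ Set.univ) := by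
  constructor
  · rintro ⟨hsub, hne, hmeet⟩
    constructor
    · intro a i
      by_cases hu : slice H a i = Set.univ
      · exact Or.inl hu
      refine Or.inr ⟨?_, hu, ?_⟩
      · rintro l hl ⟨x, ⟨hxl, hxs⟩, y, ⟨hyl, hys⟩, hxy⟩
        have hL : (fun x => Function.update a i x) '' l ∈ segreLines Ls :=
          ⟨a, i, l, hl, rfl⟩
        have h2 : (fun x => Function.update a i x) '' l ⊆ H := by
          refine hsub _ hL ⟨_, ⟨⟨x, hxl, rfl⟩, hxs⟩, _, ⟨⟨y, hyl, rfl⟩, hys⟩, ?_⟩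
          exact fun hc => hxy (Function.update_injective a i hc)
        intro z hz
        exact h2 ⟨z, hz, rfl⟩
      · intro l hl
        have hL : (fun x => Function.update a i x) '' l ∈ segreLines Ls :=
          ⟨a, i, l, hl, rfl⟩
        obtain ⟨p, ⟨x, hxl, rfl⟩, hpH⟩ := hmeet _ hL
        exact ⟨x, hxl, hpH⟩
    · obtain ⟨b, hb⟩ := (Set.ne_univ_iff_exists_notMem H).mp hne
      obtain ⟨i⟩ : Nonempty I := inferInstance
      refine ⟨b, i, fun hu => hb ?_⟩
      have : b i ∈ slice H b i := hu ▸ Set.mem_univ _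
      simpa [slice, Function.update_eq_self] using this
  · rintro ⟨hall, a0, i0, hne0⟩
    refine ⟨?_, ?_, ?_⟩
    · rintro L ⟨a, i, l, hl, rfl⟩ ⟨p, ⟨⟨x, hxl, rfl⟩, hpH⟩, q, ⟨⟨y, hyl, rfl⟩, hqH⟩, hpq⟩
      have hxy : x ≠ y := fun hc => hpq (by rw [hc])
      have hsl : IsSubspace (Ls i) (slice H a i) := by
        rcases hall a i with h' | h'
        · intro l _ _; rw [h']; exact Set.subset_univ l
        · exact h'.1
      have hls := hsl l hl ⟨x, ⟨hxl, hpH⟩, y, ⟨hyl, hqH⟩, hxy⟩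
      rintro _ ⟨z, hz, rfl⟩
      exact hls hz
    · intro hu
      apply hne0
      ext x
      simp [slice, hu]
    · rintro L ⟨a, i, l, hl, rfl⟩
      rcases hall a i with hsl | hsl
      · obtain ⟨x, hxl, -⟩ := (h i).1 l hl
        have : x ∈ slice H a i := hsl ▸ Set.mem_univ x
        exact ⟨_, ⟨x, hxl, rfl⟩, this⟩
      · obtain ⟨x, hxl, hxs⟩ := hsl.2.2 l hl
        exact ⟨_, ⟨x, hxl, rfl⟩, hxs⟩

end SegrePLS
end

section
/- Let M be the Segre product of partial linear spaces M_i, i ∈ I with |I| ≥ 2, each M_i having at least three points. If H is a spiky hyperplane of M, then the complement M∖H is not an affine partial linear space: there exist a point a ∉ H and a line L ⊄ H such that no line through a (not contained in H) is parallel to L with respect to ∥_H. -/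
namespace SegrePLS

open Set

variable {P : Type*}

variable {I : Type*} [DecidableEq I] {Pt : I → Type*}

/-- The complement of a spiky hyperplane of a Segre product (factors with at least
three points each) is not an affine partial linear space: some point outside `H`
admits no line through it parallel to some line of the complement. -/
theorem segre_complement_not_affine [Nontrivial I] (Ls : ∀ i, Set (Set (Pt i)))
    (h : ∀ i, IsPLS (Ls i))
    (h3 : ∀ i, ∃ x y z : Pt i, x ≠ y ∧ x ≠ z ∧ y ≠ z)
    (H : Set (∀ i, Pt i))
    (hH : IsHyperplane (segreLines Ls) H) (hsp : Spiky (segreLines Ls) H) :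
    ∃ a, a ∉ H ∧ ∃ l ∈ segreLines Ls, ¬ l ⊆ H ∧
      ∀ k ∈ segreLines Ls, ¬ k ⊆ H → a ∈ k → k ∩ H ≠ l ∩ H := by
  by_contra hcon
  push_neg at hcon
  obtain ⟨hsub, hne, hmeet⟩ := hH
  -- a line not contained in H meets H in exactly one point
  have htrans : ∀ l ∈ segreLines Ls, ¬ l ⊆ H → ∀ d ∈ l ∩ H, l ∩ H = {d} := by
    intro l hl hlH d hd
    refine Set.eq_singleton_iff_unique_mem.mpr ⟨hd, fun e he => ?_⟩
    by_contra hne'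
    exact hlH (hsub l hl ⟨e, he, d, hd, hne'⟩)
  -- every point of H lies on a transversal line
  have hBd : ∀ d ∈ H, ∃ l ∈ segreLines Ls, d ∈ l ∧ ¬ l ⊆ H ∧ l ∩ H = {d} := by
    intro d hd
    obtain ⟨b, hb, l, hl, hdl, hbl⟩ := hsp d hd
    have hlH : ¬ l ⊆ H := fun hs => hb (hs hbl)
    exact ⟨l, hl, hdl, hlH, htrans l hl hlH d ⟨hdl, hd⟩⟩
  -- two points of a Segre line agree off one coordinate
  have hagree : ∀ l ∈ segreLines Ls, ∀ x ∈ l, ∀ y ∈ l,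
      ∃ i : I, ∀ k, k ≠ i → x k = y k := by
    rintro l ⟨a0, i, lf, hlf, rfl⟩ x hx y hy
    obtain ⟨s, hs, rfl⟩ := hx
    obtain ⟨t, ht, rfl⟩ := hy
    exact ⟨i, fun k hk => by simp [Function.update_of_ne hk]⟩
  -- key: any point outside H agrees with any point of H off one coordinate
  have hstar : ∀ a, a ∉ H → ∀ d ∈ H, ∃ i : I, ∀ k, k ≠ i → a k = d k := by
    intro a ha d hd
    obtain ⟨l, hl, hdl, hlnH, hlH⟩ := hBd d hd
    obtain ⟨k, hk, hknH, hak, hkl⟩ := hcon a ha l hl hlnH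
    have hdk : d ∈ k ∩ H := by rw [hkl, hlH]; exact rfl
    exact hagree k hk a hak d hdk.1
  -- updating one coordinate of an outside point (to a new value) lands in H
  have hE : ∀ b, b ∉ H → ∀ i j : I, i ≠ j → ∀ w, w ≠ b i →
      Function.update b i w ∈ H := by
    intro b hb i j hij w hw
    obtain ⟨m, hm, hbm⟩ := (h j).2.1 (b j)
    set p := Function.update b i w with hp
    have hL : ((fun y => Function.update p j y) '' m) ∈ segreLines Ls :=
      ⟨p, j, m, hm, rfl⟩
    obtain ⟨x, hxL, hxH⟩ := hmeet _ hL
    obtain ⟨y, hy, rfl⟩ := hxL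
    obtain ⟨k0, hk0⟩ := hstar b hb _ hxH
    have hxi : Function.update p j y i = w := by
      rw [Function.update_of_ne hij, hp, Function.update_self]
    have hik0 : i = k0 := by
      by_contra hik
      exact hw ((hk0 i hik).trans hxi).symm
    have hjk0 : j ≠ k0 := fun hjk => hij (hjk.trans hik0.symm).symm
    have hyb : y = b j := by
      have := hk0 j hjk0
      simp only [Function.update_self] at this
      exact this.symm
    have hxp : Function.update p j y = p := by
      rw [hyb, show b j = p j by rw [hp, Function.update_of_ne (Ne.symm hij)],
        Function.update_eq_self]
    change Function.update p j y ∈ H at hxH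
    rwa [hxp] at hxH
  -- now derive the contradiction
  obtain ⟨a, ha⟩ := (Set.ne_univ_iff_exists_notMem H).mp hne
  obtain ⟨i, j, hij⟩ := exists_pair_ne I
  -- two distinct points of Pt i different from a i
  obtain ⟨x, y, z, hxy, hxz, hyz⟩ := h3 i
  obtain ⟨w, w', hww', hwa, hw'a⟩ :
      ∃ w w' : Pt i, w ≠ w' ∧ w ≠ a i ∧ w' ≠ a i := by
    by_cases hx : x = a i
    · exact ⟨y, z, hyz, by rw [← hx]; exact hxy.symm, by rw [← hx]; exact hxz.symm⟩
    · by_cases hy : y = a i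
      · exact ⟨x, z, hxz, hx, by rw [← hy]; exact hyz.symm⟩
      · exact ⟨x, y, hxy, hx, hy⟩
  -- a point of Pt j different from a j
  obtain ⟨x2, y2, z2, hxy2, -, -⟩ := h3 j
  obtain ⟨u, hu⟩ : ∃ u : Pt j, u ≠ a j := by
    by_cases hx2 : x2 = a j
    · exact ⟨y2, by rw [← hx2]; exact hxy2.symm⟩
    · exact ⟨x2, hx2⟩
  set r := Function.update (Function.update a i w) j u with hr
  have hri : r i = w := by
    rw [hr, Function.update_of_ne hij, Function.update_self]
  have hrj : r j = u := by rw [hr, Function.update_self]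
  have hoff : ∀ s : ∀ i, Pt i, s ∈ H → s i ≠ a i → s j ≠ a j → False := by
    intro s hsH hsi hsj
    obtain ⟨k0, hk0⟩ := hstar a ha s hsH
    by_cases hik : i = k0
    · exact hsj ((hk0 j fun hjk => hij (hjk.trans hik.symm).symm).symm)
    · exact hsi ((hk0 i hik).symm)
  have hrH : r ∉ H := by
    intro hrH
    exact hoff r hrH (hri.symm ▸ hwa) (hrj.symm ▸ hu)
  have hsH : Function.update r i w' ∈ H :=
    hE r hrH i j hij w' (by rw [hri]; exact hww'.symm)
  have hsi : Function.update r i w' i = w' := Function.update_self i w' r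
  have hsj : Function.update r i w' j = u := by
    rw [Function.update_of_ne (Ne.symm hij), hrj]
  exact hoff _ hsH (hsi.symm ▸ hw'a) (hsj.symm ▸ hu)

end SegrePLS
end

section
/- Let H be a non-degenerate hyperplane of the Segre product M of partial linear spaces M_i. Then H is flappy if and only if for all a ∈ S and i ∈ I, the slice H_i^[a] is a flappy hyperplane of M_i. -/
namespace SegrePLS

open Set

variable {P : Type*}

variable {I : Type*} [DecidableEq I] {Pt : I → Type*}

lemma adj_segre {Ls : ∀ i, Set (Set (Pt i))} {b p : ∀ i, Pt i}
    (hadj : Adj (segreLines Ls) b p) :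
    ∃ k, (∃ m ∈ Ls k, b k ∈ m ∧ p k ∈ m) ∧ ∀ j, j ≠ k → b j = p j := by
  obtain ⟨L, ⟨c, k, m, hm, rfl⟩, hb, hp⟩ := hadj
  obtain ⟨u, hu, rfl⟩ := hb
  obtain ⟨v, hv, hvp⟩ := hp
  refine ⟨k, ⟨m, hm, by simp [hu], ?_⟩, fun j hj => ?_⟩
  · rw [← hvp]; simp [hv]
  · rw [← hvp]; simp [Function.update_of_ne hj]

/-- A non-degenerate hyperplane of a Segre product is flappy iff all of its slices
are flappy hyperplanes of the corresponding factors. -/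
theorem segre_nondegenerate_flappy_iff [Nontrivial I] (Ls : ∀ i, Set (Set (Pt i)))
    (h : ∀ i, IsPLS (Ls i)) (H : Set (∀ i, Pt i))
    (hH : IsHyperplane (segreLines Ls) H)
    (hnd : ∀ (a : ∀ i, Pt i) (i : I), IsHyperplane (Ls i) (slice H a i)) :
    Flappy (segreLines Ls) H ↔
      ∀ (a : ∀ i, Pt i) (i : I),
        IsHyperplane (Ls i) (slice H a i) ∧ Flappy (Ls i) (slice H a i) := by
  constructor
  · intro hF a i
    refine ⟨hnd a i, ?_⟩
    intro l hl hlsub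
    have hLmem : (fun x => Function.update a i x) '' l ∈ segreLines Ls :=
      ⟨a, i, l, hl, rfl⟩
    have hLsub : (fun x => Function.update a i x) '' l ⊆ H := by
      rintro _ ⟨x, hx, rfl⟩
      exact hlsub hx
    obtain ⟨b, hbH, hbadj⟩ := hF _ hLmem hLsub
    obtain ⟨x₁, hx₁, x₂, hx₂, hne⟩ := (h i).1 l hl
    have hp1 : Function.update a i x₁ ∈ (fun x => Function.update a i x) '' l :=
      ⟨x₁, hx₁, rfl⟩
    have hp2 : Function.update a i x₂ ∈ (fun x => Function.update a i x) '' l :=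
      ⟨x₂, hx₂, rfl⟩
    have hbi : ∀ j, j ≠ i → b j = a j := by
      obtain ⟨k₁, ⟨m₁, hm₁, hbk₁, hpk₁⟩, heq₁⟩ := adj_segre (hbadj _ hp1)
      by_cases hk : k₁ = i
      · subst hk
        intro j hj
        have := heq₁ j hj
        rwa [Function.update_of_ne hj] at this
      · exfalso
        have hbi1 : b i = x₁ := by
          have := heq₁ i (fun hh => hk hh.symm)
          rwa [Function.update_self] at this
        obtain ⟨k₂, -, heq₂⟩ := adj_segre (hbadj _ hp2)
        have hk₂ : k₂ = i := by
          by_contra hk₂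
          have := heq₂ i (fun hh => hk₂ hh.symm)
          rw [Function.update_self, hbi1] at this
          exact hne this
        rw [hk₂] at heq₂
        apply hbH
        apply hLsub
        have hbp : b = Function.update a i x₁ := by
          funext j
          by_cases hj : j = i
          · subst hj; rw [Function.update_self, hbi1]
          · have := heq₂ j hj
            rw [Function.update_of_ne hj] at this ⊢
            exact this
        rw [hbp]; exact hp1
    have hby : b = Function.update a i (b i) := by
      funext j
      by_cases hj : j = i
      · subst hj; rw [Function.update_self]
      · rw [Function.update_of_ne hj]; exact hbi j hj
    refine ⟨b i, ?_, ?_⟩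
    · intro hmem
      apply hbH
      rw [hby]
      exact hmem
    · intro x hx
      obtain ⟨k, ⟨m, hm, hbk, hpk⟩, heq⟩ := adj_segre (hbadj _ ⟨x, hx, rfl⟩)
      by_cases hk : k = i
      · subst hk
        simp only [Function.update_self] at hpk
        exact ⟨m, hm, hbk, hpk⟩
      · exfalso
        have hbix : b i = x := by
          have := heq i (fun hh => hk hh.symm)
          simpa using this
        apply hbH
        apply hLsub
        refine ⟨x, hx, ?_⟩
        show Function.update a i x = b
        rw [← hbix]
        exact hby.symm
  · intro hs L hL hLH
    obtain ⟨a, i, l, hl, rfl⟩ := hL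
    have hlsub : l ⊆ slice H a i := fun x hx => hLH ⟨x, hx, rfl⟩
    obtain ⟨y, hy, hyadj⟩ := (hs a i).2 l hl hlsub
    refine ⟨Function.update a i y, hy, ?_⟩
    rintro _ ⟨x, hx, rfl⟩
    obtain ⟨m, hm, hym, hxm⟩ := hyadj x hx
    exact ⟨(fun z => Function.update a i z) '' m, ⟨a, i, m, hm, rfl⟩,
      ⟨y, hym, rfl⟩, ⟨x, hxm, rfl⟩⟩

end SegrePLS
end

section
/- Every degenerate hyperplane of the Segre product of partial linear spaces is not flappy. -/
namespace SegrePLS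

open Set

variable {P : Type*}

variable {I : Type*} [DecidableEq I] {Pt : I → Type*}

lemma adj_agree (Ls : ∀ i, Set (Set (Pt i))) {b p : ∀ i, Pt i}
    (hadj : Adj (segreLines Ls) b p) : ∃ j, ∀ m, m ≠ j → b m = p m := by
  obtain ⟨L, ⟨c, j, l', _hl', rfl⟩, hb, hp⟩ := hadj
  obtain ⟨s, _hs, rfl⟩ := hb
  obtain ⟨t, _ht, rfl⟩ := hp
  exact ⟨j, fun m hm => by simp [Function.update_of_ne hm]⟩

/-- Degenerate hyperplanes of a Segre product are not flappy. -/
theorem segre_degenerate_not_flappy [Nontrivial I] (Ls : ∀ i, Set (Set (Pt i)))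
    (h : ∀ i, IsPLS (Ls i)) (H : Set (∀ i, Pt i))
    (hH : IsHyperplane (segreLines Ls) H)
    (hdeg : ∃ (a : ∀ i, Pt i) (i : I), slice H a i = Set.univ) :
    ¬ Flappy (segreLines Ls) H := by
  intro hfl
  obtain ⟨a, i, hai⟩ := hdeg
  obtain ⟨hpls1, hpls2, _⟩ := h i
  obtain ⟨l, hl, _hal⟩ := hpls2 (a i)
  have hslice : ∀ x : Pt i, Function.update a i x ∈ H := fun x =>
    Set.eq_univ_iff_forall.mp hai x
  have hLmem : (fun x => Function.update a i x) '' l ∈ segreLines Ls :=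
    ⟨a, i, l, hl, rfl⟩
  have hLsub : (fun x => Function.update a i x) '' l ⊆ H := by
    rintro _ ⟨x, _hx, rfl⟩
    exact hslice x
  obtain ⟨b, hbH, hadj⟩ := hfl _ hLmem hLsub
  obtain ⟨x, hxl, y, hyl, hxy⟩ := hpls1 l hl
  set p := Function.update a i x with hpdef
  set q := Function.update a i y with hqdef
  have hpH : p ∈ H := hslice x
  have hqH : q ∈ H := hslice y
  obtain ⟨j, hj⟩ := adj_agree Ls (hadj p ⟨x, hxl, rfl⟩)
  obtain ⟨k, hk⟩ := adj_agree Ls (hadj q ⟨y, hyl, rfl⟩)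
  have hbp : b ≠ p := fun e => hbH (e ▸ hpH)
  have hji : j = i := by
    by_contra hji
    have hbi : b i = x := by
      have := hj i (fun h => hji h.symm)
      simpa [hpdef] using this
    have hki : k = i := by
      by_contra hki
      have hbi' : b i = y := by
        have := hk i (fun h => hki h.symm)
        simpa [hqdef] using this
      exact hxy (hbi ▸ hbi')
    have hk' : ∀ m, m ≠ i → b m = q m := fun m hm => hk m (fun h => hm (h.trans hki))
    apply hbp
    funext m
    by_cases hm : m = j
    · subst hm
      have h1 : b m = q m := hk' m (fun h => hji h)
      have hmi : m ≠ i := fun h => hji h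
      simp [hpdef, hqdef, Function.update_of_ne hmi] at h1 ⊢
      exact h1
    · exact hj m hm
  have hj2 : forall m, m ≠ i → b m = p m := fun m hm => hj m (fun h => hm (h.trans hji))
  apply hbH
  have : Function.update a i (b i) = b := by
    funext m
    by_cases hm : m = i
    · subst hm; simp
    · rw [Function.update_of_ne hm]
      have := hj2 m hm
      rw [this, hpdef, Function.update_of_ne hm]
  exact this ▸ hslice (b i)


end SegrePLS
end

section
/- Let H_i be a hyperplane of M_i for each i ∈ I, and set H = ⋃_{i∈I} {a ∈ ∏ S_j : a_i ∈ H_i}. Then H is a hyperplane of the Segre product M = ⨂ M_i, it is degenerate, and it is not spiky. -/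
namespace SegrePLS

open Set

variable {P : Type*}

variable {I : Type*} [DecidableEq I] {Pt : I → Type*}

/-- The union hyperplane built from hyperplanes of the factors is a degenerate,
non-spiky hyperplane of the Segre product. -/
theorem segre_union_hyperplane [Nontrivial I] (Ls : ∀ i, Set (Set (Pt i)))
    (h : ∀ i, IsPLS (Ls i)) (Hf : ∀ i, Set (Pt i))
    (hHf : ∀ i, IsHyperplane (Ls i) (Hf i)) :
    IsHyperplane (segreLines Ls) { a : ∀ i, Pt i | ∃ i, a i ∈ Hf i } ∧
    (∃ (a : ∀ i, Pt i) (i : I),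
      slice { a : ∀ i, Pt i | ∃ i, a i ∈ Hf i } a i = Set.univ) ∧
    ¬ Spiky (segreLines Ls) { a : ∀ i, Pt i | ∃ i, a i ∈ Hf i } := by
  classical
  set H : Set (∀ i, Pt i) := { a | ∃ i, a i ∈ Hf i } with hHdef
  have hne : ∀ i, ∃ x : Pt i, x ∉ Hf i := by
    intro i
    by_contra hc
    push_neg at hc
    exact (hHf i).2.1 (Set.eq_univ_of_forall hc)
  have hptne : ∀ i, Nonempty (Pt i) := fun i => ⟨(hne i).choose⟩
  have hHfne : ∀ i, ∃ x, x ∈ Hf i := by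
    intro i
    obtain ⟨p⟩ := hptne i
    obtain ⟨l, hl, _⟩ := (h i).2.1 p
    obtain ⟨x, hx⟩ := (hHf i).2.2 l hl
    exact ⟨x, hx.2⟩
  refine ⟨⟨?_, ?_, ?_⟩, ?_, ?_⟩
  · -- subspace
    rintro L ⟨a, i, l, hl, rfl⟩ ⟨p, ⟨hpL, hpH⟩, q, ⟨hqL, hqH⟩, hpq⟩
    by_cases hj : ∃ j, j ≠ i ∧ a j ∈ Hf j
    · obtain ⟨j, hji, hjH⟩ := hj
      rintro _ ⟨x, _, rfl⟩
      exact ⟨j, by simpa [Function.update_of_ne hji] using hjH⟩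
    · push_neg at hj
      obtain ⟨x, hx, rfl⟩ := hpL
      obtain ⟨y, hy, rfl⟩ := hqL
      have key : ∀ z : Pt i, Function.update a i z ∈ H → z ∈ Hf i := by
        rintro z ⟨j, hjm⟩
        by_cases hji : j = i
        · subst hji; simpa using hjm
        · exact absurd (by simpa [Function.update_of_ne hji] using hjm) (hj j hji)
      have hxy : x ≠ y := fun hxyeq => hpq (by rw [hxyeq])
      have hsub : l ⊆ Hf i :=
        (hHf i).1 l hl ⟨x, ⟨hx, key x hpH⟩, y, ⟨hy, key y hqH⟩, hxy⟩
      rintro _ ⟨z, hz, rfl⟩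
      exact ⟨i, by simpa using hsub hz⟩
  · -- proper
    intro hu
    have : (fun i => (hne i).choose) ∈ H := hu ▸ Set.mem_univ _
    obtain ⟨i, hi⟩ := this
    exact (hne i).choose_spec hi
  · -- meets every line
    rintro L ⟨a, i, l, hl, rfl⟩
    obtain ⟨x, hx⟩ := (hHf i).2.2 l hl
    exact ⟨Function.update a i x, ⟨x, hx.1, rfl⟩, ⟨i, by simpa using hx.2⟩⟩
  · -- degenerate
    obtain ⟨i, j, hij⟩ := exists_pair_ne I
    refine ⟨Function.update (fun k => (hne k).choose) j (hHfne j).choose, i,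
      Set.eq_univ_of_forall fun x => ?_⟩
    refine ⟨j, ?_⟩
    rw [Function.update_of_ne (Ne.symm hij), Function.update_self]
    exact (hHfne j).choose_spec
  · -- not spiky
    intro hs
    set a : ∀ i, Pt i := fun k => (hHfne k).choose with ha
    obtain ⟨i, _, _⟩ := exists_pair_ne I
    have haH : a ∈ H := ⟨i, (hHfne i).choose_spec⟩
    obtain ⟨b, hbH, L, ⟨c, k, l, hl, rfl⟩, ⟨x, hx, hax⟩, ⟨y, hy, hby⟩⟩ := hs a haH
    obtain ⟨m, hmk⟩ := exists_ne k
    refine hbH ⟨m, ?_⟩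
    have hbm : b m = a m := by
      rw [← hax, ← hby]
      simp [Function.update_of_ne hmk]
    rw [hbm]
    exact (hHfne m).choose_spec

end SegrePLS
end
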